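/- Let $\lambda, \vartheta > 0$, $\rho \in (0,1)$, $k_V = 1/\vartheta$, and define $h(\zeta) = -\frac{1}{\vartheta}\log(1 + \vartheta\zeta) + \lambda\big(1 - \sqrt{1 - 2\zeta/(\lambda\rho)}\big)$ for $\zeta \in (-1/\vartheta, \lambda\rho/2)$. Set $\gamma = \rho/(\lambda\vartheta)$ and $\zeta_{sp} = \frac{1}{\vartheta}\big(\sqrt{(\gamma+1)^2 - (1-\rho^2)} - \gamma - 1\big)$. Then $\zeta_{sp}$ lies in $(-1/\vartheta, 0]$ and $h'(\zeta_{sp}) = 0$. -/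

import Mathlib

/-!
Away from the endpoints of its domain, `h'(ζ) = -1/(1 + θζ) + 1/(ρ √(1 - 2ζ/(λρ)))`, so with
`u = 1 + θζ` the saddle point equation reads `u = ρ √(1 - 2γ(u - 1)/ρ²)`, i.e.
`u² + 2γu - (ρ² + 2γ) = 0`. Its positive root is `u = √((γ + 1)² - (1 - ρ²)) - γ`, which lies in
`(0, 1)` because `0 < ρ < 1`; this is `1 + θ ζsp`.
-/

open Real Set

theorem hasDerivAt_cgf_gamma_sub_invGaussian {lam θ ρ ζ : ℝ} (hlam : lam ≠ 0) (hθ : θ ≠ 0)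
    (hV : 0 < 1 + θ * ζ) (hU : 0 < 1 - 2 * ζ / (lam * ρ)) :
    HasDerivAt (fun ζ => -(1/θ) * log (1 + θ * ζ) + lam * (1 - sqrt (1 - 2*ζ/(lam*ρ))))
      (-1 / (1 + θ * ζ) + 1 / (ρ * sqrt (1 - 2 * ζ / (lam * ρ)))) ζ := by
  have hlin : HasDerivAt (fun ζ => 1 + θ * ζ) θ ζ := by
    simpa using ((hasDerivAt_id ζ).const_mul θ).const_add 1
  have hinner : HasDerivAt (fun ζ => 1 - 2 * ζ / (lam * ρ)) (-(2 / (lam * ρ))) ζ := by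
    simpa using (((hasDerivAt_id ζ).const_mul 2).div_const (lam * ρ)).const_sub 1
  have hlog := (hasDerivAt_log hV.ne').comp ζ hlin
  have hsqrt := (hasDerivAt_sqrt hU.ne').comp ζ hinner
  refine ((hlog.const_mul (-(1/θ))).add ((hsqrt.const_sub 1).const_mul lam)).congr_deriv ?_
  have hs : sqrt (1 - 2 * ζ / (lam * ρ)) ≠ 0 := (sqrt_pos.2 hU).ne'
  rcases eq_or_ne ρ 0 with rfl | hρ
  · simp only [mul_zero, div_zero, sub_zero, sqrt_one, mul_one, neg_zero, add_zero]
    field_simp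
  · field_simp

theorem sqrt_saddle_mem_Ioo {γ ρ : ℝ} (hγ : 0 < γ) (hρ : ρ ∈ Ioo (0:ℝ) 1) :
    sqrt ((γ + 1)^2 - (1 - ρ^2)) ∈ Ioo γ (γ + 1) := by
  obtain ⟨hρ0, hρ1⟩ := hρ
  constructor
  · exact lt_sqrt_of_sq_lt (by nlinarith)
  · exact (sqrt_lt' (by linarith)).2 (by nlinarith)

theorem one_sub_div_eq_sq_of_saddle {lam θ ρ γ S : ℝ} (hlam : lam ≠ 0) (hθ : θ ≠ 0) (hρ : ρ ≠ 0)
    (hγ : γ * (lam * θ) = ρ) (hS : S ^ 2 = (γ + 1)^2 - (1 - ρ^2)) :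
    1 - 2 * ((S - γ - 1) / θ) / (lam * ρ) = ((S - γ) / ρ)^2 := by
  have hγ0 : γ ≠ 0 := left_ne_zero_of_mul (hγ ▸ hρ)
  subst hγ
  field_simp
  linear_combination -hS

theorem stmt11 (lam θ ρ : ℝ) (hlam : 0 < lam) (hθ : 0 < θ) (hρ : ρ ∈ Set.Ioo (0:ℝ) 1) :
    let h : ℝ → ℝ := fun ζ =>
      -(1/θ) * Real.log (1 + θ * ζ) + lam * (1 - Real.sqrt (1 - 2*ζ/(lam*ρ)))
    let γ := ρ / (lam * θ)
    let ζsp := (Real.sqrt ((γ+1)^2 - (1 - ρ^2)) - γ - 1) / θ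
    ζsp ∈ Set.Ioc (-(1/θ)) 0 ∧ deriv h ζsp = 0 := by
  intro h γ ζsp
  have hρ0 : 0 < ρ := hρ.1
  have hγ : 0 < γ := by positivity
  obtain ⟨hγS, hS1⟩ := sqrt_saddle_mem_Ioo hγ hρ
  have hS2 : sqrt ((γ + 1)^2 - (1 - ρ^2)) ^ 2 = (γ + 1)^2 - (1 - ρ^2) := sq_sqrt (by nlinarith)
  have hγ_def : γ * (lam * θ) = ρ := div_mul_cancel₀ ρ (by positivity)
  have hζ : ζsp = (sqrt ((γ + 1)^2 - (1 - ρ^2)) - γ - 1) / θ := rfl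
  clear_value γ ζsp
  generalize sqrt ((γ + 1)^2 - (1 - ρ^2)) = S at *
  have hV : 1 + θ * ζsp = S - γ := by
    rw [hζ]
    field_simp
    ring
  have hU : 1 - 2 * ζsp / (lam * ρ) = ((S - γ) / ρ)^2 :=
    hζ ▸ one_sub_div_eq_sq_of_saddle hlam.ne' hθ.ne' hρ0.ne' hγ_def hS2
  have hsqrt : sqrt (1 - 2 * ζsp / (lam * ρ)) = (S - γ) / ρ := by
    rw [hU, sqrt_sq (div_nonneg (by linarith) hρ0.le)]
  refine ⟨⟨?_, ?_⟩, ?_⟩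
  · rw [hζ, neg_div']
    exact div_lt_div_of_pos_right (by linarith) hθ
  · exact hζ ▸ div_nonpos_of_nonpos_of_nonneg (by linarith) hθ.le
  · rw [(hasDerivAt_cgf_gamma_sub_invGaussian hlam.ne' hθ.ne' (by linarith)
      (by rw [hU]; positivity)).deriv, hV, hsqrt]
    field_simp
    ring
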